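/- There exists a nonzero polynomial P ∈ ℂ[λ,μ] such that whenever P(λ,μ) ≠ 0, the set of lines on X_{λ,μ}, i.e. the set of 2-dimensional ℂ-linear subspaces W ⊆ ℂ⁸ on which all four quadratic forms Q₁, Q₂, Q₃, Q₄ vanish identically, has at least 2048 elements (in particular, more than the 512 lines expected on a generic (2,2,2,2) complete intersection Calabi–Yau threefold). -/
import Mathlib


noncomputable section

/-- `Q₁ = x₀²+x₁²+x₂²+x₃²+x₄²+x₅² − 2μx₆x₇`. -/
def Q1 (m : ℂ) (x : Fin 8 → ℂ) : ℂ :=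
  x 0 ^ 2 + x 1 ^ 2 + x 2 ^ 2 + x 3 ^ 2 + x 4 ^ 2 + x 5 ^ 2 - 2 * m * x 6 * x 7

/-- `Q₂ = x₀²+x₁²+x₂²+x₃²+x₆²+x₇² − 2λx₄x₅`. -/
def Q2 (l : ℂ) (x : Fin 8 → ℂ) : ℂ :=
  x 0 ^ 2 + x 1 ^ 2 + x 2 ^ 2 + x 3 ^ 2 + x 6 ^ 2 + x 7 ^ 2 - 2 * l * x 4 * x 5

/-- `Q₃ = x₀²+x₁²+x₄²+x₅²+x₆²+x₇² − 2λx₂x₃`. -/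
def Q3 (l : ℂ) (x : Fin 8 → ℂ) : ℂ :=
  x 0 ^ 2 + x 1 ^ 2 + x 4 ^ 2 + x 5 ^ 2 + x 6 ^ 2 + x 7 ^ 2 - 2 * l * x 2 * x 3

/-- `Q₄ = x₂²+x₃²+x₄²+x₅²+x₆²+x₇² − 2λx₀x₁`. -/
def Q4 (l : ℂ) (x : Fin 8 → ℂ) : ℂ :=
  x 2 ^ 2 + x 3 ^ 2 + x 4 ^ 2 + x 5 ^ 2 + x 6 ^ 2 + x 7 ^ 2 - 2 * l * x 0 * x 1

/-- The plane `W(q,a,c,d) ⊆ ℂ⁸` spanned by `u = (1,q,ω,ωq,ω²,ω²q,0,0)` and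
`v = (a,1,a,1,a,1,c,d)`, for `ω` a primitive cube root of unity. -/
def linePlane8 (w q a c d : ℂ) : Submodule ℂ (Fin 8 → ℂ) :=
  Submodule.span ℂ
    {![1, q, w, w * q, w ^ 2, w ^ 2 * q, 0, 0], ![a, 1, a, 1, a, 1, c, d]}

/-- The system of equations characterizing the 8 lines of Lemma 4.1. -/
def lineEqs8 (l m q a c d : ℂ) : Prop :=
  q ^ 2 + 2 * l * q + 1 = 0 ∧ a * (1 + l * q) = -(l + q) ∧
    2 * m * c * d = 3 * a ^ 2 + 3 ∧ c ^ 2 + d ^ 2 + 2 * a ^ 2 - 2 * l * a + 2 = 0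

/-- First ruling vector of the quadric surface on `H = {x₀=qx₁, x₂=qx₃, x₄=qx₅, x₆=rx₇}`. -/
def rulU (q r g j t : ℂ) : Fin 8 → ℂ :=
  ![q * g, g, -(j * (q * g)), -(j * g), q * g * t, g * t, -(j * (r * t)), -(j * t)]

/-- Second ruling vector. -/
def rulV (q r g j t : ℂ) : Fin 8 → ℂ :=
  ![q * g * t, g * t, j * (q * g) * t, j * g * t, -(q * g), -g, -(j * r), -j]

lemma rulU_apply (q r g j t : ℂ) :
    rulU q r g j t 0 = q * g ∧ rulU q r g j t 1 = g ∧ rulU q r g j t 2 = -(j * (q * g)) ∧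
    rulU q r g j t 3 = -(j * g) ∧ rulU q r g j t 4 = q * g * t ∧ rulU q r g j t 5 = g * t ∧
    rulU q r g j t 6 = -(j * (r * t)) ∧ rulU q r g j t 7 = -(j * t) :=
  ⟨rfl, rfl, rfl, rfl, rfl, rfl, rfl, rfl⟩

lemma rulV_apply (q r g j t : ℂ) :
    rulV q r g j t 0 = q * g * t ∧ rulV q r g j t 1 = g * t ∧ rulV q r g j t 2 = j * (q * g) * t ∧
    rulV q r g j t 3 = j * g * t ∧ rulV q r g j t 4 = -(q * g) ∧ rulV q r g j t 5 = -g ∧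
    rulV q r g j t 6 = -(j * r) ∧ rulV q r g j t 7 = -j :=
  ⟨rfl, rfl, rfl, rfl, rfl, rfl, rfl, rfl⟩

lemma ruling_vanish (l m q r g j a b t : ℂ)
    (hq : q ^ 2 + 2 * l * q + 1 = 0) (hr : r ^ 2 + 2 * m * r + 1 = 0)
    (hg : l * q * g ^ 2 = m * r) (hj : j ^ 2 = -1) :
    Q1 m (a • rulU q r g j t + b • rulV q r g j t) = 0 ∧
    Q2 l (a • rulU q r g j t + b • rulV q r g j t) = 0 ∧
    Q3 l (a • rulU q r g j t + b • rulV q r g j t) = 0 ∧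
    Q4 l (a • rulU q r g j t + b • rulV q r g j t) = 0 := by
  obtain ⟨u0, u1, u2, u3, u4, u5, u6, u7⟩ := rulU_apply q r g j t
  obtain ⟨v0, v1, v2, v3, v4, v5, v6, v7⟩ := rulV_apply q r g j t
  simp only [Q1, Q2, Q3, Q4, Pi.add_apply, Pi.smul_apply, smul_eq_mul,
    u0, u1, u2, u3, u4, u5, u6, u7, v0, v1, v2, v3, v4, v5, v6, v7]
  refine ⟨?_, ?_, ?_, ?_⟩
  · linear_combination (g ^ 2 * (a * t + b) ^ 2) * hq + (-2 * (a * t + b) ^ 2) * hg +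
      ((q ^ 2 + 1) * g ^ 2 * (a - b * t) ^ 2 - 2 * m * r * (a * t + b) ^ 2) * hj
  · linear_combination (4 * a * b * t * g ^ 2) * hq + (-((a * t + b) ^ 2)) * hr +
      (-2 * (a * t + b) ^ 2) * hg +
      ((q ^ 2 + 1) * g ^ 2 * (a - b * t) ^ 2 + (r ^ 2 + 1) * (a * t + b) ^ 2) * hj
  · linear_combination (g ^ 2 * ((a + b * t) ^ 2 + (a * t - b) ^ 2)) * hq +
      (-((a * t + b) ^ 2)) * hr + (-2 * (a * t + b) ^ 2) * hg +
      ((r ^ 2 + 1) * (a * t + b) ^ 2 - 2 * l * q * g ^ 2 * (a - b * t) ^ 2) * hj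
  · linear_combination (g ^ 2 * ((a * t - b) ^ 2 - (a - b * t) ^ 2)) * hq +
      (-((a * t + b) ^ 2)) * hr + (-2 * (a * t + b) ^ 2) * hg +
      ((q ^ 2 + 1) * g ^ 2 * (a - b * t) ^ 2 + (r ^ 2 + 1) * (a * t + b) ^ 2) * hj

theorem stmt_14 :
    ∃ P : MvPolynomial (Fin 2) ℂ, P ≠ 0 ∧
      ∀ l m : ℂ, MvPolynomial.eval ![l, m] P ≠ 0 →
        ∃ T : Finset (Submodule ℂ (Fin 8 → ℂ)), 2048 ≤ T.card ∧
          ∀ w ∈ T, Module.finrank ℂ w = 2 ∧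
            ∀ x ∈ w, Q1 m x = 0 ∧ Q2 l x = 0 ∧ Q3 l x = 0 ∧ Q4 l x = 0 := by
  refine ⟨MvPolynomial.X 0 * MvPolynomial.X 1, ?_, ?_⟩
  · exact mul_ne_zero (MvPolynomial.X_ne_zero 0) (MvPolynomial.X_ne_zero 1)
  classical
  intro l m hP
  rw [map_mul, MvPolynomial.eval_X, MvPolynomial.eval_X] at hP
  have hl : l ≠ 0 := fun h => hP (by simp [h])
  have hm : m ≠ 0 := fun h => hP (by simp [h])
  -- roots
  obtain ⟨s, hs⟩ := IsAlgClosed.exists_pow_nat_eq (k := ℂ) (l ^ 2 - 1) (by norm_num : 0 < 2)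
  set q : ℂ := -l + s with hqdef
  have hq : q ^ 2 + 2 * l * q + 1 = 0 := by rw [hqdef]; linear_combination hs
  have hq0 : q ≠ 0 := by
    intro h; rw [h] at hq; norm_num at hq
  obtain ⟨s2, hs2⟩ := IsAlgClosed.exists_pow_nat_eq (k := ℂ) (m ^ 2 - 1) (by norm_num : 0 < 2)
  set r : ℂ := -m + s2 with hrdef
  have hr : r ^ 2 + 2 * m * r + 1 = 0 := by rw [hrdef]; linear_combination hs2
  have hr0 : r ≠ 0 := by
    intro h; rw [h] at hr; norm_num at hr
  obtain ⟨j, hj⟩ := IsAlgClosed.exists_pow_nat_eq (k := ℂ) (-1 : ℂ) (by norm_num : 0 < 2)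
  have hj0 : j ≠ 0 := by
    intro h; rw [h] at hj; norm_num at hj
  obtain ⟨g, hg2⟩ := IsAlgClosed.exists_pow_nat_eq (k := ℂ) (m * r / (l * q)) (by norm_num : 0 < 2)
  have hg : l * q * g ^ 2 = m * r := by
    rw [hg2]; field_simp [hl, hq0]
  have hg0 : g ≠ 0 := by
    intro h
    have h0 : m * r = 0 := by rw [← hg, h]; ring
    rcases mul_eq_zero.1 h0 with h' | h' <;> [exact hm h'; exact hr0 h']
  have hqg : q * g ≠ 0 := mul_ne_zero hq0 hg0
  -- the planes
  set W : ℕ → Submodule ℂ (Fin 8 → ℂ) :=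
    fun k => Submodule.span ℂ {rulU q r g j (k : ℂ), rulV q r g j (k : ℂ)} with hW
  have hinj : Set.InjOn W (Finset.range 2048) := by
    intro k _ k' _ hkk'
    have hU : rulU q r g j (k' : ℂ) ∈ W k := by
      rw [hkk']
      exact Submodule.subset_span (Set.mem_insert _ _)
    rw [hW] at hU
    rw [Submodule.mem_span_pair] at hU
    obtain ⟨a, b, hab⟩ := hU
    obtain ⟨-, u1, -, -, -, u5, -, u7⟩ := rulU_apply q r g j (k : ℂ)
    obtain ⟨-, w1, -, -, -, w5, -, w7⟩ := rulU_apply q r g j (k' : ℂ)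
    obtain ⟨-, v1, -, -, -, v5, -, v7⟩ := rulV_apply q r g j (k : ℂ)
    have e1 := congrFun hab 1
    have e5 := congrFun hab 5
    have e7 := congrFun hab 7
    simp only [Pi.add_apply, Pi.smul_apply, smul_eq_mul, u1, u5, u7, v1, v5, v7,
      w1, w5, w7] at e1 e5 e7
    -- e1 : a * g + b * (g * k) = g
    -- e5 : a * (q * g * k) + b * (-(q * g)) = q * g * k'
    -- e7 : a * (-(j * k)) + b * (-j) = -(j * k')
    have E1 : a + b * (k : ℂ) = 1 := by
      apply mul_left_cancel₀ hg0; linear_combination e1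
    have E5 : a * (k : ℂ) - b = (k' : ℂ) := by
      apply mul_left_cancel₀ hqg; linear_combination q * e5
    have E7 : a * (k : ℂ) + b = (k' : ℂ) := by
      apply mul_left_cancel₀ hj0; linear_combination -e7
    have hb : b = 0 := by linear_combination (E7 - E5) / 2
    have ha : a = 1 := by linear_combination E1 - (k : ℂ) * hb
    have : (k : ℂ) = (k' : ℂ) := by
      linear_combination E5 - (k : ℂ) * ha + hb
    exact_mod_cast this
  refine ⟨(Finset.range 2048).image W, ?_, ?_⟩
  · rw [Finset.card_image_of_injOn hinj, Finset.card_range]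
  intro w hw
  simp only [Finset.mem_image, Finset.mem_range] at hw
  obtain ⟨k, -, rfl⟩ := hw
  constructor
  · -- finrank = 2
    have hli : LinearIndependent ℂ ![rulU q r g j (k : ℂ), rulV q r g j (k : ℂ)] := by
      rw [LinearIndependent.pair_iff]
      intro a b hab
      obtain ⟨-, u1, -, -, -, u5, -, -⟩ := rulU_apply q r g j (k : ℂ)
      obtain ⟨-, v1, -, -, -, v5, -, -⟩ := rulV_apply q r g j (k : ℂ)
      have e1 := congrFun hab 1
      have e5 := congrFun hab 5
      simp only [Pi.add_apply, Pi.smul_apply, smul_eq_mul, u1, u5, v1, v5,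
        Pi.zero_apply] at e1 e5
      -- e1 : a * g + b * (g * k) = 0 ; e5 : a * (g * k) - b * g = 0 (up to form)
      have E1 : a + b * (k : ℂ) = 0 := by
        apply mul_left_cancel₀ hg0; linear_combination e1
      have E5 : a * (k : ℂ) - b = 0 := by
        apply mul_left_cancel₀ hqg; linear_combination q * e5
      have hk1 : ((k : ℂ) ^ 2 + 1) ≠ 0 := by
        have hcast : ((k : ℂ) ^ 2 + 1) = ((k ^ 2 + 1 : ℕ) : ℂ) := by push_cast; ring
        rw [hcast, Ne, Nat.cast_eq_zero]
        omega
      have hb : b = 0 := by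
        have : b * ((k : ℂ) ^ 2 + 1) = 0 := by
          linear_combination (k : ℂ) * E1 - E5
        rcases mul_eq_zero.1 this with h' | h'
        · exact h'
        · exact absurd h' hk1
      have ha : a = 0 := by linear_combination E1 - (k : ℂ) * hb
      exact ⟨ha, hb⟩
    have := finrank_span_eq_card (R := ℂ) hli
    rw [Matrix.range_cons_cons_empty] at this
    simpa using this
  · -- vanishing
    intro x hx
    rw [hW, Submodule.mem_span_pair] at hx
    obtain ⟨a, b, rfl⟩ := hx
    exact ruling_vanish l m q r g j a b (k : ℂ) hq hr hg hj
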